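/- arXiv:1806.01380 — 9 statements merged into one kernel-verified Lean document; each statement's English description precedes it below -/
import Mathlib

section
/- Let t ≥ 1 be a natural number and let R : (Fin t → ℝ) → ℝ. Then R is permutation invariant (i.e., R(x ∘ σ) = R(x) for every x : Fin t → ℝ and every permutation σ of Fin t) if and only if there exists a function R̂ : (ℝ → ℝ) → ℝ such that R(x) = R̂(F̂_t(x)) for every x : Fin t → ℝ, where F̂_t(x) is the empirical distribution of x. -/
/-- The empirical distribution of `x : Fin t → ℝ`:
`F̂_t(x)(y) = (1/t) · #{ s : x s ≤ y }`. -/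
noncomputable def empDist (t : ℕ) (x : Fin t → ℝ) : ℝ → ℝ :=
  fun y => ((Finset.univ.filter (fun s : Fin t => x s ≤ y)).card : ℝ) / t

/-!
Permuting the sample does not change the counts `#{s | x s ≤ y}`, so `R` invariant under
permutations is constant on the fibres of `empDist t` and factors through it. Conversely the
counts recover the multiplicity of every value `a` as `#{x ≤ a} - #{x ≤ b}`, where `b < a` lies
above every sample value below `a`; samples with the same multiplicities differ by a permutation
that matches their fibres over each value.
-/

open Finset Function

theorem Finset.exists_lt_forall_lt_iff_le {α : Type*} [LinearOrder α] [NoMinOrder α]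
    (s : Finset α) (a : α) : ∃ b < a, ∀ z ∈ s, z < a ↔ z ≤ b := by
  obtain ⟨c, hc⟩ := exists_lt a
  set u := insert c (s.filter (· < a))
  have hu : u.max' (insert_nonempty _ _) < a := (u.max'_lt_iff _).2 (by simpa [u] using hc)
  exact ⟨_, hu, fun z hz =>
    ⟨fun hza => u.le_max' z (mem_insert_of_mem (mem_filter.2 ⟨hz, hza⟩)), (·.trans_lt hu)⟩⟩

section Counting

variable {ι ι' α : Type*} [Fintype ι] [Fintype ι']

theorem card_filter_lt_add_card_filter_eq [LinearOrder α] (x : ι → α) (a : α) :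
    #{i | x i < a} + #{i | x i = a} = #{i | x i ≤ a} := by
  classical
  rw [← card_union_of_disjoint (disjoint_filter.2 fun _ _ h => h.ne), ← filter_or]
  simp only [le_iff_lt_or_eq]

theorem card_filter_eq_eq_of_card_filter_le_eq [LinearOrder α] [NoMinOrder α]
    {x : ι → α} {x' : ι' → α} (h : ∀ y, #{i | x i ≤ y} = #{j | x' j ≤ y}) (a : α) :
    #{i | x i = a} = #{j | x' j = a} := by
  obtain ⟨b, -, hb⟩ := (univ.image x ∪ univ.image x').exists_lt_forall_lt_iff_le a
  have hx : #{i | x i < a} = #{i | x i ≤ b} :=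
    congrArg card (filter_congr fun i _ => hb _ (by simp))
  have hx' : #{j | x' j < a} = #{j | x' j ≤ b} :=
    congrArg card (filter_congr fun j _ => hb _ (by simp))
  linarith [card_filter_lt_add_card_filter_eq x a, card_filter_lt_add_card_filter_eq x' a, h a, h b]

theorem exists_equiv_comp_eq_of_card_filter_eq_eq [DecidableEq α] {x : ι → α} {x' : ι' → α}
    (h : ∀ a, #{i | x i = a} = #{j | x' j = a}) : ∃ σ : ι ≃ ι', x' ∘ σ = x :=
  ⟨Equiv.ofFiberEquiv fun a => Fintype.equivOfCardEq (by simp only [Fintype.card_subtype, h a]),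
    funext (Equiv.ofFiberEquiv_map _)⟩

end Counting

section EmpDist

variable {t : ℕ}

theorem empDist_comp_perm (x : Fin t → ℝ) (σ : Equiv.Perm (Fin t)) :
    empDist t (x ∘ σ) = empDist t x := by
  funext y
  simp only [empDist, card_filter, comp_apply,
    Equiv.sum_comp σ (fun i => if x i ≤ y then 1 else 0)]

theorem card_filter_le_eq_of_empDist_eq {x x' : Fin t → ℝ} (h : empDist t x = empDist t x')
    (y : ℝ) : #{s | x s ≤ y} = #{s | x' s ≤ y} := by
  rcases t.eq_zero_or_pos with rfl | ht
  · simp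
  · have := congrFun h y
    rwa [empDist, empDist, div_left_inj' (by positivity), Nat.cast_inj] at this

theorem exists_perm_comp_eq_of_empDist_eq {x x' : Fin t → ℝ} (h : empDist t x = empDist t x') :
    ∃ σ : Equiv.Perm (Fin t), x' ∘ σ = x :=
  exists_equiv_comp_eq_of_card_filter_eq_eq
    (card_filter_eq_eq_of_card_filter_le_eq (card_filter_le_eq_of_empDist_eq h))

end EmpDist

theorem permutation_invariant_iff_factors_through_empirical_distribution_general
    (t : ℕ) (R : (Fin t → ℝ) → ℝ) :
    (∀ (x : Fin t → ℝ) (σ : Equiv.Perm (Fin t)), R (x ∘ σ) = R x) ↔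
      (∃ Rhat : (ℝ → ℝ) → ℝ, ∀ x : Fin t → ℝ, R x = Rhat (empDist t x)) := by
  constructor
  · intro hinv
    have hfactors : R.FactorsThrough (empDist t) := fun x x' h => by
      obtain ⟨σ, rfl⟩ := exists_perm_comp_eq_of_empDist_eq h
      exact hinv x' σ
    obtain ⟨Rhat, hR⟩ := (factorsThrough_iff R).1 hfactors
    exact ⟨Rhat, congrFun hR⟩
  · rintro ⟨Rhat, hR⟩ x σ
    rw [hR, hR, empDist_comp_perm]

/-- A function `R` on reward sequences of length `t ≥ 1` is permutation invariant
iff it factors through the empirical distribution. -/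
theorem permutation_invariant_iff_factors_through_empirical_distribution
    (t : ℕ) (ht : 1 ≤ t) (R : (Fin t → ℝ) → ℝ) :
    (∀ (x : Fin t → ℝ) (σ : Equiv.Perm (Fin t)), R (x ∘ σ) = R x) ↔
      (∃ Rhat : (ℝ → ℝ) → ℝ, ∀ x : Fin t → ℝ, R x = Rhat (empDist t x)) :=
  permutation_invariant_iff_factors_through_empirical_distribution_general t R
end

section
/- Let E be a real normed vector space, K ≥ 1 a natural number, F : Fin K → E, and let D be the convex hull of the range of F. Let R : E → ℝ, b > 0 and q ≥ 1 be such that |R(x) − R(y)| ≤ b(‖x − y‖ + ‖x − y‖^q) for all x, y ∈ D. Then R is L-Lipschitz on D with L = b(1 + (max_{i,j} ‖F(i) − F(j)‖)^{q−1}); that is, |R(x) − R(y)| ≤ L‖x − y‖ for all x, y ∈ D. -/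
/-- If `R` admits the polynomial local modulus of continuity
`|R x − R y| ≤ b(‖x−y‖ + ‖x−y‖^q)` on the convex hull `D` of the arm
distributions `F 1, …, F K`, then `R` is Lipschitz on `D` with constant
`L = b (1 + (max_{i,j} ‖F i − F j‖)^{q−1})`. -/
theorem strong_stability_lipschitz
    {E : Type*} [NormedAddCommGroup E] [NormedSpace ℝ E]
    (K : ℕ) (hK : 1 ≤ K) (F : Fin K → E)
    (R : E → ℝ) (b q : ℝ) (hb : 0 < b) (hq : 1 ≤ q)
    (hmod : ∀ x ∈ convexHull ℝ (Set.range F), ∀ y ∈ convexHull ℝ (Set.range F),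
      |R x - R y| ≤ b * (‖x - y‖ + ‖x - y‖ ^ q)) :
    ∀ x ∈ convexHull ℝ (Set.range F), ∀ y ∈ convexHull ℝ (Set.range F),
      |R x - R y| ≤ b * (1 + (⨆ i, ⨆ j, ‖F i - F j‖) ^ (q - 1)) * ‖x - y‖ := by
  intro x hx y hy
  set M : ℝ := ⨆ i, ⨆ j, ‖F i - F j‖ with hM
  haveI : NeZero K := ⟨by omega⟩
  have hbdd : ∀ i j : Fin K, ‖F i - F j‖ ≤ M := by
    intro i j
    calc ‖F i - F j‖ ≤ ⨆ j, ‖F i - F j‖ :=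
          le_ciSup (f := fun j => ‖F i - F j‖) (Set.Finite.bddAbove (Set.finite_range _)) j
      _ ≤ M := le_ciSup (f := fun i => ⨆ j, ‖F i - F j‖) (Set.Finite.bddAbove (Set.finite_range _)) i
  have hM0 : 0 ≤ M := le_trans (norm_nonneg _) (hbdd 0 0)
  -- distance bound
  have hdist : ‖x - y‖ ≤ M := by
    obtain ⟨x', hx', y', hy', H⟩ := convexHull_exists_dist_ge2 hx hy
    obtain ⟨i, rfl⟩ := hx'
    obtain ⟨j, rfl⟩ := hy'
    rw [dist_eq_norm] at H
    exact le_trans (by simpa [dist_eq_norm] using H) (hbdd i j)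
  rcases eq_or_ne x y with rfl | hne
  · simp only [sub_self, norm_zero, mul_zero, abs_nonpos_iff, sub_eq_zero]
  · have h0 : (0:ℝ) < ‖x - y‖ := by
      rw [norm_pos_iff, sub_ne_zero]; exact hne
    have key : ‖x - y‖ ^ q ≤ M ^ (q - 1) * ‖x - y‖ := by
      have : ‖x - y‖ ^ q = ‖x - y‖ ^ (q - 1) * ‖x - y‖ := by
        rw [show q = (q - 1) + 1 by ring, Real.rpow_add h0, Real.rpow_one]
        ring_nf
      rw [this]
      exact mul_le_mul_of_nonneg_right
        (Real.rpow_le_rpow (norm_nonneg _) hdist (by linarith)) h0.le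
    calc |R x - R y| ≤ b * (‖x - y‖ + ‖x - y‖ ^ q) := hmod x hx y hy
      _ ≤ b * (‖x - y‖ + M ^ (q - 1) * ‖x - y‖) := by
          apply mul_le_mul_of_nonneg_left _ hb.le
          linarith
      _ = b * (1 + M ^ (q - 1)) * ‖x - y‖ := by ring
end

section
/- Let (Ω, 𝔽, P) be a probability space, let Z : Ω → ℝ be a nonnegative random variable, and let Y : Ω → ℝ be a random variable. Let b > 0, q ≥ 1 and c > 0. Assume P(Z ≥ x) ≤ 2·exp(−c x²) for all x > 0, and |Y(ω)| ≤ b(Z(ω) + Z(ω)^q) for all ω. Then for all x > 0, P(|Y| ≥ x) ≤ 4·exp(−c · min{(x/(2b))², (x/(2b))^{2/q}}). -/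
open MeasureTheory

/-- Concentration transfer: if `Z ≥ 0` has sub-Gaussian tail
`P(Z ≥ x) ≤ 2 exp(−c x²)` and `|Y| ≤ b (Z + Z^q)` pointwise, then
`P(|Y| ≥ x) ≤ 4 exp(−c min{(x/2b)², (x/2b)^{2/q}})` for all `x > 0`. -/
theorem concentration_transfer
    {Ω : Type*} [MeasurableSpace Ω] (P : Measure Ω) [IsProbabilityMeasure P]
    (Z Y : Ω → ℝ) (hZnn : ∀ ω, 0 ≤ Z ω)
    (b q c : ℝ) (hb : 0 < b) (hq : 1 ≤ q) (hc : 0 < c)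
    (htail : ∀ x : ℝ, 0 < x →
      P {ω | x ≤ Z ω} ≤ ENNReal.ofReal (2 * Real.exp (-c * x ^ 2)))
    (hY : ∀ ω, |Y ω| ≤ b * (Z ω + Z ω ^ q)) :
    ∀ x : ℝ, 0 < x →
      P {ω | x ≤ |Y ω|} ≤
        ENNReal.ofReal (4 * Real.exp (-c *
          min ((x / (2 * b)) ^ 2) ((x / (2 * b)) ^ ((2 : ℝ) / q)))) := by
  intro x hx
  set t := x / (2 * b) with ht
  have hq0 : 0 < q := lt_of_lt_of_le one_pos hq
  have ht0 : 0 < t := by positivity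
  have hs0 : 0 < t ^ (1 / q) := Real.rpow_pos_of_pos ht0 _
  have hsub : {ω | x ≤ |Y ω|} ⊆ {ω | t ≤ Z ω} ∪ {ω | t ^ (1 / q) ≤ Z ω} := by
    intro ω hω
    simp only [Set.mem_setOf_eq, Set.mem_union]
    by_contra h
    push_neg at h
    obtain ⟨h1, h2⟩ := h
    have hZq : Z ω ^ q < t := by
      calc Z ω ^ q < (t ^ (1 / q)) ^ q := Real.rpow_lt_rpow (hZnn ω) h2 hq0
        _ = t := by
          rw [← Real.rpow_mul ht0.le, one_div_mul_cancel hq0.ne', Real.rpow_one]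
    have : |Y ω| < x := by
      calc |Y ω| ≤ b * (Z ω + Z ω ^ q) := hY ω
        _ < b * (t + t) := by
          apply mul_lt_mul_of_pos_left (add_lt_add h1 hZq) hb
        _ = x := by
          rw [ht]; field_simp; ring
    exact absurd hω (not_le.mpr this)
  have hrw : (t ^ (1 / q)) ^ (2 : ℕ) = t ^ ((2 : ℝ) / q) := by
    rw [← Real.rpow_natCast (t ^ (1 / q)) 2, ← Real.rpow_mul ht0.le]
    rw [one_div, inv_mul_eq_div]
    norm_num
  set m := min (t ^ 2) (t ^ ((2 : ℝ) / q)) with hm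
  have key : 2 * Real.exp (-c * t ^ 2) + 2 * Real.exp (-c * (t ^ (1 / q)) ^ 2)
      ≤ 4 * Real.exp (-c * m) := by
    have e1 : Real.exp (-c * t ^ 2) ≤ Real.exp (-c * m) := by
      apply Real.exp_le_exp.mpr
      have : m ≤ t ^ 2 := min_le_left _ _
      nlinarith
    have e2 : Real.exp (-c * (t ^ (1 / q)) ^ 2) ≤ Real.exp (-c * m) := by
      apply Real.exp_le_exp.mpr
      rw [hrw]
      have : m ≤ t ^ ((2 : ℝ) / q) := min_le_right _ _
      nlinarith
    linarith
  calc P {ω | x ≤ |Y ω|}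
      ≤ P ({ω | t ≤ Z ω} ∪ {ω | t ^ (1 / q) ≤ Z ω}) := measure_mono hsub
    _ ≤ P {ω | t ≤ Z ω} + P {ω | t ^ (1 / q) ≤ Z ω} := measure_union_le _ _
    _ ≤ ENNReal.ofReal (2 * Real.exp (-c * t ^ 2))
        + ENNReal.ofReal (2 * Real.exp (-c * (t ^ (1 / q)) ^ 2)) :=
        add_le_add (htail t ht0) (htail _ hs0)
    _ = ENNReal.ofReal (2 * Real.exp (-c * t ^ 2)
        + 2 * Real.exp (-c * (t ^ (1 / q)) ^ 2)) := by
        rw [ENNReal.ofReal_add (by positivity) (by positivity)]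
    _ ≤ ENNReal.ofReal (4 * Real.exp (-c * m)) := ENNReal.ofReal_le_ofReal key
end

section
/- Let (Ω, 𝔽, P) be a probability space, K ≥ 1 and T ≥ 1 natural numbers, and a > 0. For each i ∈ Fin K and each s ∈ {1, …, T}, let Z_{i,s} : Ω → ℝ be a nonnegative random variable with P(Z_{i,s} > x) ≤ 2·exp(−a s x²) for all x > 0, and set Z_{i,0} := 0. Let τ_i : Ω → {0, 1, …, T} be random variables (measurable) with Σ_{i} τ_i(ω) = T for all ω. Define W(ω) := (1/T) Σ_i τ_i(ω) · Z_{i, τ_i(ω)}(ω). Then for all x > 0, P(W > x) ≤ 2KT·exp(−a T x² / K²). -/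
open MeasureTheory Finset

/-! If `W > x`, then `∑ i, τ i · Z i (τ i) > T x`, so some arm `i` has
`τ i · Z i (τ i) > T x / K`; in particular `s = τ i ≥ 1` and `Z i s > T x / (K s)`.
Since `s ≤ T`, the tail bound at this threshold is
`2 exp(−a T² x² / (K² s)) ≤ 2 exp(−a T x² / K²)`, and a union bound over the
`K T` pairs `(i, s)` finishes the proof. -/

theorem exists_lt_of_card_nsmul_lt_sum {ι M : Type*} [Fintype ι] [AddCommMonoid M]
    [LinearOrder M] [AddLeftMono M] {f : ι → M} {c : M}
    (h : Fintype.card ι • c < ∑ i, f i) : ∃ i, c < f i := by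
  rw [← card_univ, ← sum_const] at h
  obtain ⟨i, -, hi⟩ := exists_lt_of_sum_lt h
  exact ⟨i, hi⟩

theorem measure_biUnion_finset_le_card_mul {α ι : Type*} [MeasurableSpace α] (μ : Measure α)
    (s : Finset ι) (A : ι → Set α) {c : ENNReal} (h : ∀ i ∈ s, μ (A i) ≤ c) :
    μ (⋃ i ∈ s, A i) ≤ #s * c := by
  simpa only [nsmul_eq_mul] using
    (measure_biUnion_finset_le s A).trans (sum_le_card_nsmul s _ c h)

theorem setOf_card_nsmul_lt_sum_mul_subset {Ω ι : Type*} [Fintype ι] (τ : ι → Ω → ℕ)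
    (Z : ι → ℕ → Ω → ℝ) {T : ℕ} (hτ : ∀ i ω, τ i ω ≤ T) {c : ℝ}
    (hc : 0 ≤ c) :
    {ω | Fintype.card ι • (T * c) < ∑ i, (τ i ω : ℝ) * Z i (τ i ω) ω} ⊆
      ⋃ p ∈ (univ : Finset ι) ×ˢ Icc 1 T, {ω | T * c / p.2 < Z p.1 p.2 ω} := by
  intro ω (hω : Fintype.card ι • ((T : ℝ) * c) < _)
  obtain ⟨i, hi⟩ := exists_lt_of_card_nsmul_lt_sum hω
  have hτ_pos : 0 < τ i ω := by
    by_contra! h0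
    rw [Nat.le_zero.mp h0, Nat.cast_zero, zero_mul] at hi
    exact hi.not_ge (by positivity)
  simp only [Set.mem_iUnion, Set.mem_ofPred_eq, mem_product, mem_univ, mem_Icc, true_and]
  refine ⟨(i, τ i ω), ⟨hτ_pos, hτ i ω⟩, ?_⟩
  rwa [div_lt_iff₀ (by exact_mod_cast hτ_pos), mul_comm (Z _ _ _)]

theorem neg_mul_mul_div_sq_le {a s t : ℝ} (u : ℝ) (ha : 0 ≤ a) (hs : 0 < s) (hst : s ≤ t) :
    -a * s * (t * u / s) ^ 2 ≤ -a * t * u ^ 2 := by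
  have hatu : 0 ≤ a * t * u ^ 2 := by have := hs.trans_le hst; positivity
  calc -a * s * (t * u / s) ^ 2 = -a * t * u ^ 2 * (t / s) := by field_simp
    _ ≤ -a * t * u ^ 2 * 1 :=
        mul_le_mul_of_nonpos_left ((one_le_div hs).2 hst) (by linarith)
    _ = -a * t * u ^ 2 := mul_one _

theorem policy_empirical_concentration_general
    {Ω : Type*} [MeasurableSpace Ω] (P : Measure Ω)
    (K T : ℕ) (hK : 1 ≤ K) (hT : 1 ≤ T) (a : ℝ) (ha : 0 < a)
    (Z : Fin K → ℕ → Ω → ℝ)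
    (htail : ∀ i s, 1 ≤ s → s ≤ T → ∀ x : ℝ, 0 < x →
      P {ω | x < Z i s ω} ≤ ENNReal.ofReal (2 * Real.exp (-a * s * x ^ 2)))
    (τ : Fin K → Ω → ℕ)
    (hτle : ∀ i ω, τ i ω ≤ T) :
    ∀ x : ℝ, 0 < x →
      P {ω | x < (1 / (T : ℝ)) * ∑ i, (τ i ω : ℝ) * Z i (τ i ω) ω} ≤
        ENNReal.ofReal (2 * K * T * Real.exp (-a * T * x ^ 2 / K ^ 2)) := by
  intro x hx
  have hK_pos : (0 : ℝ) < K := by exact_mod_cast hK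
  have hT_pos : (0 : ℝ) < T := by exact_mod_cast hT
  have hscale : Fintype.card (Fin K) • ((T : ℝ) * (x / K)) = T * x := by
    rw [Fintype.card_fin, nsmul_eq_mul]
    field_simp
  have hevent : {ω | x < (1 / (T : ℝ)) * ∑ i, (τ i ω : ℝ) * Z i (τ i ω) ω} =
      {ω | Fintype.card (Fin K) • (T * (x / K)) < ∑ i, (τ i ω : ℝ) * Z i (τ i ω) ω} :=
    Set.ext fun ω ↦ by
      rw [Set.mem_ofPred_eq, Set.mem_ofPred_eq, hscale, one_div, inv_mul_eq_div,
        lt_div_iff₀' hT_pos]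
  calc _ ≤ P (⋃ p ∈ (univ : Finset (Fin K)) ×ˢ Icc 1 T,
          {ω | T * (x / K) / p.2 < Z p.1 p.2 ω}) :=
        measure_mono (hevent ▸ setOf_card_nsmul_lt_sum_mul_subset τ Z hτle (by positivity))
    _ ≤ #((univ : Finset (Fin K)) ×ˢ Icc 1 T) *
          ENNReal.ofReal (2 * Real.exp (-a * T * (x / K) ^ 2)) := by
        refine measure_biUnion_finset_le_card_mul P _ _ fun p hp ↦ ?_
        obtain ⟨hs₁, hsT⟩ : 1 ≤ p.2 ∧ p.2 ≤ T := by simpa using hp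
        refine (htail _ _ hs₁ hsT _ (by positivity)).trans (ENNReal.ofReal_le_ofReal ?_)
        gcongr 2 * Real.exp ?_
        exact neg_mul_mul_div_sq_le _ ha.le (by exact_mod_cast hs₁) (by exact_mod_cast hsT)
    _ = _ := by
        rw [card_product, card_univ, Fintype.card_fin, Nat.card_Icc, Nat.add_sub_cancel,
          Nat.cast_mul, ← ENNReal.ofReal_natCast, ← ENNReal.ofReal_natCast T,
          ← ENNReal.ofReal_mul (by positivity), ← ENNReal.ofReal_mul (by positivity),
          mul_div_assoc, ← div_pow]
        congr 1
        ring

/-- Concentration of the empirical distribution of a bandit policy: if each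
`Z i s` (`1 ≤ s ≤ T`) is nonnegative with tail `P(Z i s > x) ≤ 2 exp(−a s x²)`,
`Z i 0 = 0`, and the (random, measurable) pull counts `τ i` sum to `T`, then
`W = (1/T) ∑ i, τ i · Z i (τ i)` satisfies
`P(W > x) ≤ 2KT exp(−a T x² / K²)` for all `x > 0`. -/
theorem policy_empirical_concentration
    {Ω : Type*} [MeasurableSpace Ω] (P : Measure Ω) [IsProbabilityMeasure P]
    (K T : ℕ) (hK : 1 ≤ K) (hT : 1 ≤ T) (a : ℝ) (ha : 0 < a)
    (Z : Fin K → ℕ → Ω → ℝ)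
    (hZmeas : ∀ i s, Measurable (Z i s))
    (hZ0 : ∀ i ω, Z i 0 ω = 0)
    (hZnn : ∀ i s, 1 ≤ s → s ≤ T → ∀ ω, 0 ≤ Z i s ω)
    (htail : ∀ i s, 1 ≤ s → s ≤ T → ∀ x : ℝ, 0 < x →
      P {ω | x < Z i s ω} ≤ ENNReal.ofReal (2 * Real.exp (-a * s * x ^ 2)))
    (τ : Fin K → Ω → ℕ) (hτmeas : ∀ i, Measurable (τ i))
    (hτle : ∀ i ω, τ i ω ≤ T) (hτsum : ∀ ω, ∑ i, τ i ω = T) :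
    ∀ x : ℝ, 0 < x →
      P {ω | x < (1 / (T : ℝ)) * ∑ i, (τ i ω : ℝ) * Z i (τ i ω) ω} ≤
        ENNReal.ofReal (2 * K * T * Real.exp (-a * T * x ^ 2 / K ^ 2)) :=
  policy_empirical_concentration_general P K T hK hT a ha Z htail τ hτle
end

section
/- Let Z be a nonnegative random variable on a probability space, and let N ≥ 3, λ > 0 and q ≥ 1 be real numbers, with m := ⌈q/2 − 1⌉ (a natural number). If P(Z > x) ≤ 2N·exp(−λ x²) for all x > 0, then E[Z^q] ≤ ((log N)/λ)^{q/2} · (1 + 3·q·m!). -/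
open MeasureTheory

/-!
By the layer-cake formula `E[Z^q] = q ∫₀^∞ t^(q-1) P(Z > t) dt`. Split the integral at
`x₀ = √(log N / λ)`. Below `x₀` bound the probability by `1`, which contributes `x₀^q`.
Above `x₀` use the tail bound together with `t^(q-1) ≤ x₀^(q-2m-2) t^(2m+1)`: the Gaussian
moment `∫_{x₀}^∞ t^(2m+1) e^(-λt²) dt` equals `m! e^(-u) e_m(u) / (2λ^(m+1))`, where
`u = λx₀² = log N` and `e_m` is the degree-`m` Taylor polynomial of `exp`. Then `e^(-u) = 1/N`
cancels the factor `N`, and `e_m(u) ≤ e·u^m` leaves `3 q m! x₀^q`.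
-/

section

open Real Set Filter Finset Topology

noncomputable def expPartialSum (m : ℕ) (u : ℝ) : ℝ :=
  ∑ j ∈ range (m + 1), u ^ j / j.factorial

theorem expPartialSum_nonneg (m : ℕ) {u : ℝ} (hu : 0 ≤ u) : 0 ≤ expPartialSum m u :=
  sum_nonneg fun _ _ => by positivity

theorem hasDerivAt_expPartialSum (m : ℕ) (u : ℝ) :
    HasDerivAt (expPartialSum m) (expPartialSum m u - u ^ m / m.factorial) u := by
  induction m with
  | zero =>
    have h0 : expPartialSum 0 = fun _ => 1 := by funext; simp [expPartialSum]
    simpa [h0] using hasDerivAt_const u (1 : ℝ)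
  | succ m ih =>
    have hsucc : expPartialSum (m + 1) =
        fun u => expPartialSum m u + u ^ (m + 1) / (m + 1).factorial :=
      funext fun u => sum_range_succ _ _
    rw [hsucc]
    refine (ih.add ((hasDerivAt_pow (m + 1) u).div_const ((m + 1).factorial : ℝ))).congr_deriv ?_
    simp only [Nat.add_sub_cancel, Nat.factorial_succ]
    push_cast
    field_simp
    ring

theorem hasDerivAt_exp_neg_mul_expPartialSum (m : ℕ) (u : ℝ) :
    HasDerivAt (fun u => exp (-u) * expPartialSum m u) (-(exp (-u) * u ^ m / m.factorial)) u := by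
  refine ((hasDerivAt_neg u).exp.mul (hasDerivAt_expPartialSum m u)).congr_deriv ?_
  ring

theorem tendsto_exp_neg_mul_expPartialSum_atTop (m : ℕ) :
    Tendsto (fun u => exp (-u) * expPartialSum m u) atTop (𝓝 0) := by
  have h : Tendsto (fun u => ∑ j ∈ range (m + 1), u ^ j * exp (-u) / j.factorial) atTop
      (𝓝 (∑ j ∈ range (m + 1), 0 / (j.factorial : ℝ))) :=
    tendsto_finsetSum _ fun j _ => (tendsto_pow_mul_exp_neg_atTop_nhds_zero j).div_const _
  simp only [zero_div, sum_const_zero] at h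
  refine h.congr fun u => ?_
  rw [expPartialSum, mul_sum]
  exact sum_congr rfl fun j _ => by ring

theorem expPartialSum_le_exp_one_mul_pow (m : ℕ) {u : ℝ} (hu : 1 ≤ u) :
    expPartialSum m u ≤ exp 1 * u ^ m :=
  calc expPartialSum m u ≤ ∑ j ∈ range (m + 1), u ^ m * ((1 : ℝ) ^ j / j.factorial) :=
        sum_le_sum fun j hj => by
          rw [one_pow, mul_one_div]
          gcongr
          exact Nat.lt_succ_iff.mp (mem_range.mp hj)
    _ = u ^ m * ∑ j ∈ range (m + 1), (1 : ℝ) ^ j / j.factorial := (mul_sum ..).symm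
    _ ≤ u ^ m * exp 1 := by gcongr; exact sum_le_exp_of_nonneg zero_le_one _
    _ = exp 1 * u ^ m := mul_comm ..

theorem expPartialSum_div_pow_succ_le_three (m : ℕ) {u : ℝ} (hu : 1 ≤ u) :
    expPartialSum m u / u ^ (m + 1) ≤ 3 := by
  rw [div_le_iff₀ (by positivity), pow_succ]
  calc expPartialSum m u ≤ exp 1 * u ^ m := expPartialSum_le_exp_one_mul_pow m hu
    _ ≤ 3 * (u ^ m * u) := by
      gcongr
      · linarith [exp_one_lt_d9]
      · exact le_mul_of_one_le_right (by positivity) hu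

theorem integrable_pow_mul_exp_neg_mul_sq (n : ℕ) {b : ℝ} (hb : 0 < b) :
    Integrable fun t : ℝ => t ^ n * exp (-b * t ^ 2) := by
  simpa only [rpow_natCast] using
    integrable_rpow_mul_exp_neg_mul_sq hb (s := n) (by linarith [n.cast_nonneg (α := ℝ)])

-- `m! e^(-u) e_m(u)` is the upper incomplete gamma function `Γ(m + 1, u)`.
theorem integral_Ioi_pow_mul_exp_neg_mul_sq (m : ℕ) {b : ℝ} (hb : 0 < b) (s : ℝ) :
    ∫ t in Ioi s, t ^ (2 * m + 1) * exp (-b * t ^ 2) =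
      m.factorial * exp (-(b * s ^ 2)) * expPartialSum m (b * s ^ 2) / (2 * b ^ (m + 1)) := by
  set F : ℝ → ℝ := fun t =>
    -(m.factorial * (exp (-(b * t ^ 2)) * expPartialSum m (b * t ^ 2))) / (2 * b ^ (m + 1))
  have hderiv (t : ℝ) : HasDerivAt F (t ^ (2 * m + 1) * exp (-b * t ^ 2)) t := by
    have hsq : HasDerivAt (fun t => b * t ^ 2) (b * (2 * t)) t := by
      simpa using (hasDerivAt_pow 2 t).const_mul b
    refine ((((hasDerivAt_exp_neg_mul_expPartialSum m _).comp t hsq).const_mul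
      (m.factorial : ℝ)).neg.div_const (2 * b ^ (m + 1))).congr_deriv ?_
    field_simp
    ring
  have hlim : Tendsto F atTop (𝓝 0) := by
    have h := (((tendsto_exp_neg_mul_expPartialSum_atTop m).comp
      ((tendsto_pow_atTop two_ne_zero).const_mul_atTop hb)).const_mul
      (m.factorial : ℝ)).neg.div_const (2 * b ^ (m + 1))
    simpa using h
  rw [integral_Ioi_of_hasDerivAt_of_tendsto' (fun t _ => hderiv t)
    (integrable_pow_mul_exp_neg_mul_sq _ hb).integrableOn hlim]
  simp only [F]
  ring

theorem rpow_le_rpow_sub_mul_rpow {a t r s : ℝ} (ha : 0 < a) (ht : a ≤ t) (hrs : r ≤ s) :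
    t ^ r ≤ a ^ (r - s) * t ^ s := by
  calc t ^ r = t ^ (r - s) * t ^ s := by
        rw [← rpow_add (ha.trans_le ht), sub_add_cancel]
    _ ≤ a ^ (r - s) * t ^ s :=
        mul_le_mul_of_nonneg_right (rpow_le_rpow_of_nonpos ha ht (sub_nonpos.mpr hrs))
          (rpow_nonneg (ha.le.trans ht) _)

variable {Ω : Type*} [MeasurableSpace Ω] {μ : Measure Ω} {f : Ω → ℝ}

theorem lintegral_rpow_le_rpow_add_lintegral_Ioi [IsZeroOrProbabilityMeasure μ]
    (hf_nn : 0 ≤ᵐ[μ] f) (hf : AEMeasurable f μ) {q x₀ : ℝ} (hq : 0 < q)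
    (hx₀ : 0 ≤ x₀) :
    ∫⁻ ω, ENNReal.ofReal (f ω ^ q) ∂μ ≤ ENNReal.ofReal (x₀ ^ q) + ENNReal.ofReal q *
      ∫⁻ t in Ioi x₀, μ {ω | t < f ω} * ENNReal.ofReal (t ^ (q - 1)) := by
  have hbody : ∫⁻ t in Ioc 0 x₀, μ {ω | t < f ω} * ENNReal.ofReal (t ^ (q - 1)) ≤
      ENNReal.ofReal (x₀ ^ q / q) :=
    calc ∫⁻ t in Ioc 0 x₀, μ {ω | t < f ω} * ENNReal.ofReal (t ^ (q - 1))
        ≤ ∫⁻ t in Ioc 0 x₀, ENNReal.ofReal (t ^ (q - 1)) :=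
          lintegral_mono fun t => mul_le_of_le_one_left' prob_le_one
      _ = ENNReal.ofReal (∫ t in Ioc 0 x₀, t ^ (q - 1)) := by
          refine (ofReal_integral_eq_lintegral_ofReal ?_ ?_).symm
          · exact (intervalIntegrable_iff_integrableOn_Ioc_of_le hx₀).mp
              (intervalIntegral.intervalIntegrable_rpow' (by linarith))
          · filter_upwards [ae_restrict_mem measurableSet_Ioc] with t ht
            exact rpow_nonneg ht.1.le _
      _ = ENNReal.ofReal (x₀ ^ q / q) := by
          rw [← intervalIntegral.integral_of_le hx₀,
            integral_rpow (Or.inl (by linarith)), sub_add_cancel, zero_rpow hq.ne', sub_zero]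
  rw [lintegral_rpow_eq_lintegral_meas_lt_mul μ hf_nn hf hq, ← Ioc_union_Ioi_eq_Ioi hx₀,
    lintegral_union measurableSet_Ioi Ioc_disjoint_Ioi_same, mul_add]
  gcongr
  calc ENNReal.ofReal q * _ ≤ ENNReal.ofReal q * ENNReal.ofReal (x₀ ^ q / q) := by gcongr
    _ = ENNReal.ofReal (x₀ ^ q) := by
      rw [← ENNReal.ofReal_mul hq.le, mul_div_cancel₀ _ hq.ne']

theorem lintegral_Ioi_meas_lt_mul_rpow_le (m : ℕ) {C b x₀ q : ℝ} (hC : 0 ≤ C) (hb : 0 < b)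
    (hx₀ : 0 < x₀) (hqm : q ≤ 2 * m + 2)
    (htail : ∀ t, x₀ < t → μ {ω | t < f ω} ≤ ENNReal.ofReal (C * exp (-b * t ^ 2))) :
    ∫⁻ t in Ioi x₀, μ {ω | t < f ω} * ENNReal.ofReal (t ^ (q - 1)) ≤
      ENNReal.ofReal (C * m.factorial * x₀ ^ q * exp (-(b * x₀ ^ 2)) *
        expPartialSum m (b * x₀ ^ 2) / (2 * (b * x₀ ^ 2) ^ (m + 1))) := by
  set r : ℝ := q - 1 - (2 * m + 1)
  have hintegrable : Integrable fun t : ℝ => C * x₀ ^ r * (t ^ (2 * m + 1) * exp (-b * t ^ 2)) :=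
    (integrable_pow_mul_exp_neg_mul_sq _ hb).const_mul _
  have hpointwise (t : ℝ) (ht : x₀ < t) : μ {ω | t < f ω} * ENNReal.ofReal (t ^ (q - 1)) ≤
      ENNReal.ofReal (C * x₀ ^ r * (t ^ (2 * m + 1) * exp (-b * t ^ 2))) := by
    have hpow : t ^ (q - 1) ≤ x₀ ^ r * t ^ (2 * m + 1) := by
      have h := rpow_le_rpow_sub_mul_rpow (r := q - 1) (s := (2 * m + 1 : ℕ)) hx₀ ht.le
        (by push_cast; linarith)
      rwa [rpow_natCast, Nat.cast_add, Nat.cast_mul, Nat.cast_ofNat, Nat.cast_one] at h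
    calc _ ≤ ENNReal.ofReal (C * exp (-b * t ^ 2)) * ENNReal.ofReal (t ^ (q - 1)) := by
          gcongr
          exact htail t ht
      _ = ENNReal.ofReal (C * exp (-b * t ^ 2) * t ^ (q - 1)) :=
          (ENNReal.ofReal_mul (by positivity)).symm
      _ ≤ _ := ENNReal.ofReal_le_ofReal <| by
          calc _ ≤ C * exp (-b * t ^ 2) * (x₀ ^ r * t ^ (2 * m + 1)) := by gcongr
            _ = _ := by ring
  calc _ ≤ ∫⁻ t in Ioi x₀,
          ENNReal.ofReal (C * x₀ ^ r * (t ^ (2 * m + 1) * exp (-b * t ^ 2))) :=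
        setLIntegral_mono (by fun_prop) hpointwise
    _ = ENNReal.ofReal
          (∫ t in Ioi x₀, C * x₀ ^ r * (t ^ (2 * m + 1) * exp (-b * t ^ 2))) := by
        refine (ofReal_integral_eq_lintegral_ofReal hintegrable.integrableOn ?_).symm
        filter_upwards [ae_restrict_mem measurableSet_Ioi] with t ht
        have ht₀ : 0 < t := hx₀.trans ht
        positivity
    _ = _ := by
        have hr : x₀ ^ r = x₀ ^ q / x₀ ^ (2 * m + 2) := by
          rw [← rpow_natCast, ← rpow_sub hx₀]
          congr 1
          simp only [r]
          push_cast
          ring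
        rw [integral_const_mul, integral_Ioi_pow_mul_exp_neg_mul_sq m hb, hr]
        congr 1
        field_simp
        ring

end

/-- Moment bound: if the nonnegative random variable `Z` satisfies
`P(Z > x) ≤ 2N exp(−λ x²)` for all `x > 0` (with `N ≥ 3`, `λ > 0`, `q ≥ 1`,
`m = ⌈q/2 − 1⌉`), then `E[Z^q] ≤ ((log N)/λ)^{q/2} (1 + 3 q m!)`. -/
theorem subgaussian_moment_bound
    {Ω : Type*} [MeasurableSpace Ω] (P : Measure Ω) [IsProbabilityMeasure P]
    (Z : Ω → ℝ) (hZmeas : Measurable Z) (hZnn : ∀ ω, 0 ≤ Z ω)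
    (N lam q : ℝ) (hN : 3 ≤ N) (hlam : 0 < lam) (hq : 1 ≤ q)
    (htail : ∀ x : ℝ, 0 < x →
      P {ω | x < Z ω} ≤ ENNReal.ofReal (2 * N * Real.exp (-lam * x ^ 2))) :
    ∫⁻ ω, ENNReal.ofReal (Z ω ^ q) ∂P ≤
      ENNReal.ofReal ((Real.log N / lam) ^ (q / 2) *
        (1 + 3 * q * ((⌈q / 2 - 1⌉₊).factorial : ℝ))) := by
  set m := ⌈q / 2 - 1⌉₊
  set L := Real.log N
  have hq₀ : 0 < q := by linarith
  have hN₀ : 0 < N := by linarith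
  have hL : 1 ≤ L := (Real.le_log_iff_exp_le hN₀).mpr (by linarith [Real.exp_one_lt_d9])
  have hqm : q ≤ 2 * m + 2 := by linarith [Nat.le_ceil (q / 2 - 1)]
  -- at `x₀` the tail bound `2N e^(-λx²)` has dropped to `2`
  set x₀ := √(L / lam)
  have hx₀ : 0 < x₀ := Real.sqrt_pos.mpr (by positivity)
  have hlamx₀ : lam * x₀ ^ 2 = L := by rw [Real.sq_sqrt (by positivity)]; field_simp
  have hsplit := lintegral_rpow_le_rpow_add_lintegral_Ioi (μ := P) (ae_of_all _ hZnn)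
    hZmeas.aemeasurable hq₀ hx₀.le
  have hupper := lintegral_Ioi_meas_lt_mul_rpow_le m (by positivity) hlam hx₀ hqm
    fun t ht => htail t (hx₀.trans ht)
  rw [hlamx₀, Real.exp_neg, Real.exp_log hN₀] at hupper
  have hE₀ := expPartialSum_nonneg m (zero_le_one.trans hL)
  refine hsplit.trans ((add_le_add le_rfl (mul_le_mul_right hupper _)).trans ?_)
  calc _ = ENNReal.ofReal (x₀ ^ q * (1 + expPartialSum m L / L ^ (m + 1) * q * m.factorial)) := by
        rw [← ENNReal.ofReal_mul hq₀.le, ← ENNReal.ofReal_add (by positivity) (by positivity)]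
        congr 1
        field_simp
    _ ≤ _ := by
        rw [Real.rpow_div_two_eq_sqrt q (by positivity)]
        gcongr
        exact expPartialSum_div_pow_succ_le_three m hL
end

section
/- Let Z be a nonnegative random variable on a probability space, and let C > 0, λ > 0, v ≥ 1 and M > 0 be real numbers, with m := ⌈v/2 − 1⌉ (a natural number). If P(Z > x) ≤ C·exp(−λ x²) for all x > 0, then E[Z^v · 1{Z > M}] ≤ C · M^v · exp(−λ M²) · (1 + (v/2) Σ_{j=0}^{m} (m!/j!) · (λ M²)^{−(m+1−j)}). -/
/-!
By the layer cake formula for `P` restricted to `{Z > M}`,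
`E[Z^v; Z > M] = M^v P(Z > M) + v ∫_M^∞ t^(v-1) P(Z > t) dt`.
Since `m = ⌈v/2 - 1⌉` gives `v - 1 ≤ 2m + 1`, for `t ≥ M` we have
`t^(v-1) ≤ M^(v-2m-2) t^(2m+1)`, which reduces the tail term to the incomplete Gaussian moment
`∫_M^∞ t^(2m+1) e^(-λt²) dt = Γ(m+1, λM²) / (2λ^(m+1))`. For integer `m` the incomplete gamma
function is elementary: `Γ(m+1, u) = e^(-u) m! ∑_{j ≤ m} u^j / j!`, because the derivative of
`-e^(-u) m! ∑_{j ≤ m} u^j / j!` telescopes to `u^m e^(-u)`.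
-/

open MeasureTheory Set Filter Topology Real

/-- `exp (-u) * gammaTailPoly m u` is the upper incomplete gamma function `Γ(m + 1, u)`. -/
noncomputable def gammaTailPoly (m : ℕ) (u : ℝ) : ℝ :=
  ∑ j ∈ Finset.range (m + 1), (m.factorial / j.factorial : ℝ) * u ^ j

lemma gammaTailPoly_zero (u : ℝ) : gammaTailPoly 0 u = 1 := by simp [gammaTailPoly]

lemma gammaTailPoly_succ (m : ℕ) (u : ℝ) :
    gammaTailPoly (m + 1) u = u ^ (m + 1) + (m + 1) * gammaTailPoly m u := by
  rw [gammaTailPoly, Finset.sum_range_succ, gammaTailPoly, Finset.mul_sum, add_comm]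
  congr 1
  · rw [div_self (by positivity), one_mul]
  · refine Finset.sum_congr rfl fun j _ => ?_
    rw [Nat.factorial_succ]; push_cast; ring

lemma gammaTailPoly_nonneg (m : ℕ) {u : ℝ} (hu : 0 ≤ u) : 0 ≤ gammaTailPoly m u :=
  Finset.sum_nonneg fun _ _ => by positivity

lemma hasDerivAt_gammaTailPoly (m : ℕ) (u : ℝ) :
    HasDerivAt (gammaTailPoly m) (gammaTailPoly m u - u ^ m) u := by
  induction m with
  | zero =>
    rw [show gammaTailPoly 0 = fun _ => 1 from funext gammaTailPoly_zero]
    simpa using hasDerivAt_const u (1 : ℝ)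
  | succ m ih =>
    rw [show gammaTailPoly (m + 1) = fun u => u ^ (m + 1) + (m + 1) * gammaTailPoly m u from
      funext (gammaTailPoly_succ m)]
    refine ((hasDerivAt_pow (m + 1) u).fun_add (ih.const_mul ((m : ℝ) + 1))).congr_deriv ?_
    simp only [Nat.add_sub_cancel, Nat.cast_add, Nat.cast_one]
    ring

lemma hasDerivAt_neg_exp_neg_mul_gammaTailPoly (m : ℕ) (u : ℝ) :
    HasDerivAt (fun u => -(exp (-u) * gammaTailPoly m u)) (u ^ m * exp (-u)) u := by
  refine ((hasDerivAt_neg u).exp.fun_mul (hasDerivAt_gammaTailPoly m u)).fun_neg.congr_deriv ?_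
  ring

lemma tendsto_exp_neg_mul_gammaTailPoly (m : ℕ) :
    Tendsto (fun u => exp (-u) * gammaTailPoly m u) atTop (𝓝 0) := by
  have h := tendsto_finsetSum (Finset.range (m + 1)) fun j _ =>
    (tendsto_pow_mul_exp_neg_atTop_nhds_zero j).const_mul (m.factorial / j.factorial : ℝ)
  simp only [mul_zero, Finset.sum_const_zero] at h
  refine h.congr fun u => ?_
  rw [gammaTailPoly, Finset.mul_sum]
  exact Finset.sum_congr rfl fun j _ => by ring

lemma hasDerivAt_exp_neg_mul_sq_mul_gammaTailPoly (m : ℕ) {lam : ℝ} (hlam : lam ≠ 0) (x : ℝ) :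
    HasDerivAt
      (fun x => -(exp (-(lam * x ^ 2)) * gammaTailPoly m (lam * x ^ 2)) / (2 * lam ^ (m + 1)))
      (x ^ (2 * m + 1) * exp (-lam * x ^ 2)) x := by
  have hu : HasDerivAt (fun x => lam * x ^ 2) (lam * (2 * x)) x := by
    simpa using (hasDerivAt_pow 2 x).const_mul lam
  refine (((hasDerivAt_neg_exp_neg_mul_gammaTailPoly m (lam * x ^ 2)).comp x hu).div_const
    (2 * lam ^ (m + 1))).congr_deriv ?_
  field_simp
  ring

theorem lintegral_Ioi_pow_mul_exp_neg_mul_sq (m : ℕ) {lam A : ℝ} (hlam : 0 < lam) (hA : 0 ≤ A) :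
    ∫⁻ x in Ioi A, ENNReal.ofReal (x ^ (2 * m + 1) * exp (-lam * x ^ 2)) =
      ENNReal.ofReal
        (exp (-lam * A ^ 2) * gammaTailPoly m (lam * A ^ 2) / (2 * lam ^ (m + 1))) := by
  have hderiv : ∀ x ∈ Ici A, HasDerivAt _ _ x := fun x _ =>
    hasDerivAt_exp_neg_mul_sq_mul_gammaTailPoly m hlam.ne' x
  have hnonneg : ∀ x ∈ Ioi A, 0 ≤ x ^ (2 * m + 1) * exp (-lam * x ^ 2) := fun x hx => by
    have := hA.trans_lt hx; positivity
  have hlim : Tendsto (fun x => -(exp (-(lam * x ^ 2)) * gammaTailPoly m (lam * x ^ 2)) /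
      (2 * lam ^ (m + 1))) atTop (𝓝 0) := by
    simpa using ((tendsto_exp_neg_mul_gammaTailPoly m).comp
      ((tendsto_pow_atTop two_ne_zero).const_mul_atTop hlam)).neg.div_const (2 * lam ^ (m + 1))
  rw [← ofReal_integral_eq_lintegral_ofReal (integrableOn_Ioi_deriv_of_nonneg' hderiv hnonneg hlim)
    ((ae_restrict_iff' measurableSet_Ioi).2 (Eventually.of_forall hnonneg)),
    integral_Ioi_of_hasDerivAt_of_nonneg' hderiv hnonneg hlim]
  congr 1
  rw [neg_mul]
  ring

lemma ofReal_mul_lintegral_Ioc_rpow_sub_one {p M : ℝ} (hp : 0 < p) (hM : 0 ≤ M) :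
    ENNReal.ofReal p * ∫⁻ t in Ioc 0 M, ENNReal.ofReal (t ^ (p - 1)) = ENNReal.ofReal (M ^ p) := by
  have hint : IntegrableOn (fun t : ℝ => t ^ (p - 1)) (Ioc 0 M) :=
    (intervalIntegrable_iff_integrableOn_Ioc_of_le hM).1
      (intervalIntegral.intervalIntegrable_rpow' (by linarith))
  have hnn : 0 ≤ᵐ[volume.restrict (Ioc 0 M)] fun t : ℝ => t ^ (p - 1) :=
    (ae_restrict_iff' measurableSet_Ioc).2 (Eventually.of_forall fun t ht => rpow_nonneg ht.1.le _)
  rw [← ofReal_integral_eq_lintegral_ofReal hint hnn, ← ENNReal.ofReal_mul hp.le,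
    ← intervalIntegral.integral_of_le hM, integral_rpow (Or.inl (by linarith)), sub_add_cancel,
    zero_rpow hp.ne']
  congr 1
  field_simp
  ring

theorem setLIntegral_gt_rpow_eq_lintegral_meas_lt_mul {α : Type*} [MeasurableSpace α]
    (μ : Measure α) {f : α → ℝ} (hf : Measurable f) {p M : ℝ} (hp : 0 < p) (hM : 0 ≤ M) :
    ∫⁻ ω in {ω | M < f ω}, ENNReal.ofReal (f ω ^ p) ∂μ =
      μ {ω | M < f ω} * ENNReal.ofReal (M ^ p) +
        ENNReal.ofReal p * ∫⁻ t in Ioi M, μ {ω | t < f ω} * ENNReal.ofReal (t ^ (p - 1)) := by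
  set s := {ω | M < f ω}
  have hs : MeasurableSet s := measurableSet_lt measurable_const hf
  have hnn : 0 ≤ᵐ[μ.restrict s] f :=
    (ae_restrict_iff' hs).2 (Eventually.of_forall fun ω hω => hM.trans hω.le)
  rw [lintegral_rpow_eq_lintegral_meas_lt_mul _ hnn hf.aemeasurable hp,
    ← Ioc_union_Ioi_eq_Ioi hM, lintegral_union measurableSet_Ioi (Ioc_disjoint_Ioi le_rfl),
    mul_add]
  congr 1
  · have hsub : ∀ t ∈ Ioc 0 M, s ⊆ {ω | t < f ω} := fun t ht ω hω => ht.2.trans_lt hω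
    rw [setLIntegral_congr_fun measurableSet_Ioc (g := fun t => μ s * ENNReal.ofReal (t ^ (p - 1)))
        fun t ht => by rw [Measure.restrict_apply' hs, inter_eq_right.2 (hsub t ht)],
      lintegral_const_mul _ (by fun_prop), mul_left_comm,
      ofReal_mul_lintegral_Ioc_rpow_sub_one hp hM]
  · have hsub : ∀ t ∈ Ioi M, {ω | t < f ω} ⊆ s := fun t ht ω hω => (mem_Ioi.1 ht).trans hω
    refine congrArg _ (setLIntegral_congr_fun measurableSet_Ioi fun t ht => ?_)
    rw [Measure.restrict_apply' hs, inter_eq_left.2 (hsub t ht)]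

lemma rpow_le_rpow_sub_mul_rpow_s8 {M t a b : ℝ} (hM : 0 < M) (hMt : M ≤ t) (hab : a ≤ b) :
    t ^ a ≤ M ^ (a - b) * t ^ b := by
  have ht : 0 < t := hM.trans_le hMt
  rw [← sub_add_cancel a b, rpow_add ht, add_sub_cancel_right]
  exact mul_le_mul_of_nonneg_right (rpow_le_rpow_of_nonpos hM hMt (by linarith)) (by positivity)

theorem setLIntegral_Ioi_meas_lt_mul_rpow_le {α : Type*} [MeasurableSpace α] {μ : Measure α}
    {f : α → ℝ} {C lam a M : ℝ} (n : ℕ) (hC : 0 ≤ C) (hM : 0 < M) (ha : a ≤ n)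
    (htail : ∀ t, M < t → μ {ω | t < f ω} ≤ ENNReal.ofReal (C * exp (-lam * t ^ 2))) :
    ∫⁻ t in Ioi M, μ {ω | t < f ω} * ENNReal.ofReal (t ^ a) ≤
      ENNReal.ofReal (C * M ^ (a - n)) *
        ∫⁻ t in Ioi M, ENNReal.ofReal (t ^ n * exp (-lam * t ^ 2)) := by
  rw [← lintegral_const_mul' _ _ ENNReal.ofReal_ne_top]
  refine setLIntegral_mono' measurableSet_Ioi fun t (ht : M < t) => ?_
  calc μ {ω | t < f ω} * ENNReal.ofReal (t ^ a)
      ≤ ENNReal.ofReal (C * exp (-lam * t ^ 2)) * ENNReal.ofReal (M ^ (a - n) * t ^ n) := by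
        gcongr
        · exact htail t ht
        · rw [← rpow_natCast]
          exact rpow_le_rpow_sub_mul_rpow_s8 hM ht.le ha
    _ = ENNReal.ofReal (C * M ^ (a - n)) * ENNReal.ofReal (t ^ n * exp (-lam * t ^ 2)) := by
        rw [← ENNReal.ofReal_mul (by positivity), ← ENNReal.ofReal_mul (by positivity)]
        ring_nf

lemma sum_factorial_div_mul_inv_pow_eq (m : ℕ) {u : ℝ} (hu : u ≠ 0) :
    ∑ j ∈ Finset.range (m + 1), (m.factorial / j.factorial : ℝ) * (u ^ (m + 1 - j))⁻¹ =
      gammaTailPoly m u / u ^ (m + 1) := by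
  rw [gammaTailPoly, Finset.sum_div]
  refine Finset.sum_congr rfl fun j hj => ?_
  rw [pow_sub₀ u hu (by simp at hj; omega), mul_inv, inv_inv]
  ring

theorem subgaussian_truncated_moment_bound_general
    {Ω : Type*} [MeasurableSpace Ω] (P : Measure Ω)
    (Z : Ω → ℝ) (hZmeas : Measurable Z)
    (C lam v M : ℝ) (hC : 0 < C) (hlam : 0 < lam) (hv : 1 ≤ v) (hM : 0 < M)
    (htail : ∀ x : ℝ, 0 < x →
      P {ω | x < Z ω} ≤ ENNReal.ofReal (C * Real.exp (-lam * x ^ 2))) :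
    ∫⁻ ω in {ω | M < Z ω}, ENNReal.ofReal (Z ω ^ v) ∂P ≤
      ENNReal.ofReal (C * M ^ v * Real.exp (-lam * M ^ 2) *
        (1 + (v / 2) * ∑ j ∈ Finset.range (⌈v / 2 - 1⌉₊ + 1),
          ((⌈v / 2 - 1⌉₊.factorial : ℝ) / (j.factorial : ℝ)) *
            ((lam * M ^ 2) ^ (⌈v / 2 - 1⌉₊ + 1 - j))⁻¹)) := by
  set m := ⌈v / 2 - 1⌉₊
  have hv0 : 0 < v := by linarith
  have hm : v - 1 ≤ ((2 * m + 1 : ℕ) : ℝ) := by push_cast; linarith [Nat.le_ceil (v / 2 - 1)]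
  have hMm : M ^ (v - 1 - ((2 * m + 1 : ℕ) : ℝ)) = M ^ v / (M ^ 2) ^ (m + 1) := by
    rw [show v - 1 - ((2 * m + 1 : ℕ) : ℝ) = v - ((2 * (m + 1) : ℕ) : ℝ) by push_cast; ring,
      rpow_sub hM, rpow_natCast, pow_mul]
  calc _ = P {ω | M < Z ω} * ENNReal.ofReal (M ^ v) + ENNReal.ofReal v *
        ∫⁻ t in Ioi M, P {ω | t < Z ω} * ENNReal.ofReal (t ^ (v - 1)) :=
        setLIntegral_gt_rpow_eq_lintegral_meas_lt_mul P hZmeas hv0 hM.le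
    _ ≤ ENNReal.ofReal (C * exp (-lam * M ^ 2)) * ENNReal.ofReal (M ^ v) + ENNReal.ofReal v *
        (ENNReal.ofReal (C * M ^ (v - 1 - ((2 * m + 1 : ℕ) : ℝ))) *
          ∫⁻ t in Ioi M, ENNReal.ofReal (t ^ (2 * m + 1) * exp (-lam * t ^ 2))) := by
        gcongr
        · exact htail M hM
        · exact setLIntegral_Ioi_meas_lt_mul_rpow_le _ hC.le hM hm fun t ht => htail t (hM.trans ht)
    _ = _ := by
        rw [lintegral_Ioi_pow_mul_exp_neg_mul_sq m hlam hM.le, ← ENNReal.ofReal_mul (by positivity),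
          ← ENNReal.ofReal_mul (by positivity), ← ENNReal.ofReal_mul hv0.le,
          ← ENNReal.ofReal_add (by positivity)
            (by have := gammaTailPoly_nonneg m (by positivity : 0 ≤ lam * M ^ 2); positivity),
          sum_factorial_div_mul_inv_pow_eq m (by positivity), hMm]
        congr 1
        field_simp
        ring

/-- Truncated moment bound (the quantity `Γ^π_T(v, M)`): if the nonnegative
random variable `Z` satisfies `P(Z > x) ≤ C exp(−λ x²)` for all `x > 0`, then
with `m = ⌈v/2 − 1⌉`,
`E[Z^v 1{Z > M}] ≤ C M^v exp(−λ M²) (1 + (v/2) ∑_{j=0}^m (m!/j!) (λ M²)^{−(m+1−j)})`. -/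
theorem subgaussian_truncated_moment_bound
    {Ω : Type*} [MeasurableSpace Ω] (P : Measure Ω) [IsProbabilityMeasure P]
    (Z : Ω → ℝ) (hZmeas : Measurable Z) (hZnn : ∀ ω, 0 ≤ Z ω)
    (C lam v M : ℝ) (hC : 0 < C) (hlam : 0 < lam) (hv : 1 ≤ v) (hM : 0 < M)
    (htail : ∀ x : ℝ, 0 < x →
      P {ω | x < Z ω} ≤ ENNReal.ofReal (C * Real.exp (-lam * x ^ 2))) :
    ∫⁻ ω in {ω | M < Z ω}, ENNReal.ofReal (Z ω ^ v) ∂P ≤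
      ENNReal.ofReal (C * M ^ v * Real.exp (-lam * M ^ 2) *
        (1 + (v / 2) * ∑ j ∈ Finset.range (⌈v / 2 - 1⌉₊ + 1),
          ((⌈v / 2 - 1⌉₊.factorial : ℝ) / (j.factorial : ℝ)) *
            ((lam * M ^ 2) ^ (⌈v / 2 - 1⌉₊ + 1 - j))⁻¹)) :=
  subgaussian_truncated_moment_bound_general P Z hZmeas C lam v M hC hlam hv hM htail
end

section
/- Let F be a cumulative distribution function with ∫_{−∞}^0 F(y) dy < ∞, and let α ∈ (0,1). Then for every z ∈ ℝ, z − (1/α)∫_{−∞}^{z} F(y) dy ≤ CVaR_α(F), with equality at z = VaR_α(F); that is, CVaR_α(F) = sup_{z ∈ ℝ} [ z − (1/α)∫_{−∞}^{z} F(y) dy ]. -/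
open MeasureTheory

/-- A cumulative distribution function: nondecreasing, right-continuous,
tending to `0` at `−∞` and to `1` at `+∞`. -/
def IsCDF (F : ℝ → ℝ) : Prop :=
  Monotone F ∧ (∀ y : ℝ, ContinuousWithinAt F (Set.Ici y) y) ∧
    Filter.Tendsto F Filter.atBot (nhds 0) ∧ Filter.Tendsto F Filter.atTop (nhds 1)

/-- Value-at-risk at level `α`: `VaR_α(F) = inf{ y : F y ≥ α }`. -/
noncomputable def VaR (α : ℝ) (F : ℝ → ℝ) : ℝ :=
  sInf {y : ℝ | α ≤ F y}

/-- Conditional value-at-risk at level `α`: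
`CVaR_α(F) = VaR_α(F) − (1/α) ∫_{−∞}^{VaR_α(F)} F(y) dy`. -/
noncomputable def CVaR (α : ℝ) (F : ℝ → ℝ) : ℝ :=
  VaR α F - (1 / α) * ∫ y in Set.Iio (VaR α F), F y

/-!
For `z ≥ v = VaR_α(F)` we have `F ≥ α` on `[v, z)`, and for `z ≤ v` we have `F < α` on `[z, v)`;
in both cases `α (z - v) ≤ ∫_v^z F`. Since `∫_{-∞}^z F - ∫_{-∞}^v F = ∫_v^z F`, this says exactly
that `z ↦ z - (1/α) ∫_{-∞}^z F` is maximal at `z = v`, where its value is `CVaR_α(F)`.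
-/

open Set

theorem MeasureTheory.LocallyIntegrable.integrableOn_Iio_of_integrableOn_Iic {F : ℝ → ℝ}
    (hF : LocallyIntegrable F) {a : ℝ} (ha : IntegrableOn F (Iic a)) (z : ℝ) :
    IntegrableOn F (Iio z) := by
  have h : IntegrableOn F (Iic a ∪ Icc a (max a z)) :=
    ha.union (hF.integrableOn_isCompact isCompact_Icc)
  rw [Iic_union_Icc_eq_Iic (le_max_left a z)] at h
  exact h.mono_set (Iio_subset_Iic_self.trans (Iic_subset_Iic.2 (le_max_right a z)))

namespace IsCDF

variable {F : ℝ → ℝ} {α : ℝ}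

theorem bddBelow_setOf_le (hF : IsCDF F) (hα : 0 < α) : BddBelow {y | α ≤ F y} := by
  obtain ⟨y₀, hy₀⟩ := (hF.2.2.1.eventually (eventually_lt_nhds hα)).exists
  exact ⟨y₀, fun y hy => le_of_not_gt fun hlt => (hy.trans (hF.1 hlt.le)).not_gt hy₀⟩

theorem nonempty_setOf_le (hF : IsCDF F) (hα : α < 1) : {y | α ≤ F y}.Nonempty := by
  obtain ⟨y, hy⟩ := (hF.2.2.2.eventually (eventually_gt_nhds hα)).exists
  exact ⟨y, hy.le⟩

theorem lt_of_lt_VaR (hF : IsCDF F) (hα : 0 < α) {y : ℝ} (hy : y < VaR α F) : F y < α :=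
  lt_of_not_ge fun h => (csInf_le (hF.bddBelow_setOf_le hα) h).not_gt hy

theorem le_apply_VaR (hF : IsCDF F) (hα₀ : 0 < α) (hα₁ : α < 1) : α ≤ F (VaR α F) := by
  have hright : ∀ y, VaR α F < y → α ≤ F y := fun y hy => by
    obtain ⟨s, hs, hsy⟩ :=
      (csInf_lt_iff (hF.bddBelow_setOf_le hα₀) (hF.nonempty_setOf_le hα₁)).1 hy
    exact hs.trans (hF.1 hsy.le)
  refine ge_of_tendsto ((hF.2.1 _).mono_left (nhdsWithin_mono _ Ioi_subset_Ici_self)) ?_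
  filter_upwards [self_mem_nhdsWithin] with y hy using hright y hy

theorem le_of_VaR_le (hF : IsCDF F) (hα₀ : 0 < α) (hα₁ : α < 1) {y : ℝ} (hy : VaR α F ≤ y) :
    α ≤ F y :=
  (hF.le_apply_VaR hα₀ hα₁).trans (hF.1 hy)

end IsCDF

section Threshold

variable {F : ℝ → ℝ} {α v : ℝ}

theorem mul_sub_le_intervalIntegral_of_threshold (hF : LocallyIntegrable F)
    (hbelow : ∀ y < v, F y ≤ α) (habove : ∀ y, v ≤ y → α ≤ F y) (z : ℝ) :
    α * (z - v) ≤ ∫ y in v..z, F y := by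
  have hII : ∀ a b, IntervalIntegrable F volume a b := fun a b =>
    (hF.integrableOn_isCompact isCompact_uIcc).intervalIntegrable
  have hconst : ∀ a b, ∫ _ in a..b, α = α * (b - a) := fun a b => by
    rw [intervalIntegral.integral_const, smul_eq_mul, mul_comm]
  rcases le_total v z with hvz | hzv
  · calc α * (z - v) = ∫ _ in v..z, α := (hconst v z).symm
      _ ≤ ∫ y in v..z, F y :=
        intervalIntegral.integral_mono_on hvz intervalIntegrable_const (hII v z)
          fun y hy => habove y hy.1
  · have hle : ∫ y in z..v, F y ≤ α * (v - z) :=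
      (hconst z v) ▸ intervalIntegral.integral_mono_on_of_le_Ioo hzv (hII z v)
        intervalIntegrable_const fun y hy => hbelow y hy.2
    rw [intervalIntegral.integral_symm]
    linarith

theorem sub_integral_Iio_le_of_threshold (hF : LocallyIntegrable F)
    (hIio : ∀ z, IntegrableOn F (Iio z)) (hα : 0 < α)
    (hbelow : ∀ y < v, F y ≤ α) (habove : ∀ y, v ≤ y → α ≤ F y) (z : ℝ) :
    z - (1 / α) * ∫ y in Iio z, F y ≤ v - (1 / α) * ∫ y in Iio v, F y := by
  have hkey : z - v ≤ (1 / α) * ∫ y in v..z, F y := by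
    rw [one_div_mul_eq_div, le_div_iff₀ hα, mul_comm]
    exact mul_sub_le_intervalIntegral_of_threshold hF hbelow habove z
  rw [← intervalIntegral.integral_Iio_sub_Iio' (hIio z) (hIio v), mul_sub] at hkey
  linarith

end Threshold

/-- The variational (Rockafellar–Uryasev) representation of CVaR:
`z − (1/α)∫_{−∞}^z F ≤ CVaR_α(F)` for every `z`, with equality at
`z = VaR_α(F)`, i.e. `CVaR_α(F) = sup_z [z − (1/α)∫_{−∞}^z F]`. -/
theorem CVaR_sup_representation (F : ℝ → ℝ) (hF : IsCDF F)
    (hInt : IntegrableOn F (Set.Iic (0 : ℝ)))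
    (α : ℝ) (hα : α ∈ Set.Ioo (0 : ℝ) 1) :
    (∀ z : ℝ, z - (1 / α) * ∫ y in Set.Iio z, F y ≤ CVaR α F) ∧
      CVaR α F = ⨆ z : ℝ, (z - (1 / α) * ∫ y in Set.Iio z, F y) := by
  obtain ⟨hα₀, hα₁⟩ := hα
  have hloc : LocallyIntegrable F := hF.1.locallyIntegrable
  have hle : ∀ z : ℝ, z - (1 / α) * ∫ y in Iio z, F y ≤ CVaR α F :=
    sub_integral_Iio_le_of_threshold hloc (hloc.integrableOn_Iio_of_integrableOn_Iic hInt) hα₀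
      (fun _ hy => (hF.lt_of_lt_VaR hα₀ hy).le) (fun _ hy => hF.le_of_VaR_le hα₀ hα₁ hy)
  refine ⟨hle, le_antisymm ?_ (ciSup_le hle)⟩
  exact le_ciSup (f := fun z => z - (1 / α) * ∫ y in Iio z, F y)
    ⟨CVaR α F, forall_mem_range.2 hle⟩ (VaR α F)
end

section
/- Let α ∈ (0,1) and let F and G be cumulative distribution functions with m(F) and m(G) finite and d(F,G) finite. Then |VaR_α(F) − VaR_α(G)| ≤ (2·m(F) + d(F,G)) / min{α, 1−α}. In particular, |VaR_α(G)| ≤ m(G) / min{α, 1−α} for any CDF G with m(G) finite. -/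
open MeasureTheory

/-- `m(F) = max{1, ∫_{−∞}^0 F, ∫_0^∞ (1 − F)}`, a tail-size functional. -/
noncomputable def mTail (F : ℝ → ℝ) : ℝ :=
  max 1 (max (∫ y in Set.Iic (0 : ℝ), F y) (∫ y in Set.Ioi (0 : ℝ), (1 - F y)))

/-- `d(F,G) = max{ sup_y |F−G|, |∫_{−∞}^0 (F−G)|, |∫_0^∞ (F−G)| }`, the norm
distance between two CDFs. -/
noncomputable def dDist (F G : ℝ → ℝ) : ℝ :=
  max (⨆ y : ℝ, |F y - G y|)
    (max |∫ y in Set.Iic (0 : ℝ), (F y - G y)| |∫ y in Set.Ioi (0 : ℝ), (F y - G y)|)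

/-!
A Markov-type inequality bounds the VaR of a single CDF: if `F y ≥ α` with `y < 0`, then
`F ≥ α` on `(y, 0]`, so `|y| α ≤ ∫_{−∞}^0 F ≤ m(F)`; symmetrically, at `t = m(F)/(1−α)` the
inequality `t (1 − F t) ≤ ∫_0^∞ (1 − F) ≤ m(F)` forces `F t ≥ α`. Hence
`|VaR_α F| ≤ m(F) / min{α, 1−α}`. The bound on the difference follows from the triangle
inequality together with `m(G) ≤ m(F) + d(F,G)`.
-/

open Set

lemma mul_le_setIntegral_of_le_on_Ioc {f : ℝ → ℝ} {s : Set ℝ} {a b c : ℝ} (hab : a ≤ b)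
    (hs : Ioc a b ⊆ s) (hf : IntegrableOn f s) (hf0 : 0 ≤ᵐ[volume.restrict s] f)
    (hc : ∀ x ∈ Ioc a b, c ≤ f x) :
    (b - a) * c ≤ ∫ x in s, f x :=
  calc (b - a) * c = c * volume.real (Ioc a b) := by rw [Real.volume_real_Ioc_of_le hab, mul_comm]
    _ ≤ ∫ x in Ioc a b, f x :=
      setIntegral_ge_of_const_le_real measurableSet_Ioc measure_Ioc_lt_top.ne hc (hf.mono_set hs)
    _ ≤ ∫ x in s, f x := setIntegral_mono_set hf hf0 (Filter.Eventually.of_forall hs)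

lemma one_le_mTail (F : ℝ → ℝ) : 1 ≤ mTail F := le_max_left _ _

lemma mTail_pos (F : ℝ → ℝ) : 0 < mTail F := zero_lt_one.trans_le (one_le_mTail F)

lemma integral_Iic_le_mTail (F : ℝ → ℝ) : ∫ y in Iic (0 : ℝ), F y ≤ mTail F :=
  le_max_of_le_right (le_max_left _ _)

lemma integral_Ioi_le_mTail (F : ℝ → ℝ) : ∫ y in Ioi (0 : ℝ), (1 - F y) ≤ mTail F :=
  le_max_of_le_right (le_max_right _ _)

lemma mTail_le_mTail_add_dDist {F G : ℝ → ℝ}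
    (hIntF : IntegrableOn F (Iic 0)) (hIntF' : IntegrableOn (fun y => 1 - F y) (Ioi 0))
    (hIntG : IntegrableOn G (Iic 0)) (hIntG' : IntegrableOn (fun y => 1 - G y) (Ioi 0)) :
    mTail G ≤ mTail F + dDist F G := by
  have hIic : |∫ y in Iic (0 : ℝ), (F y - G y)| ≤ dDist F G :=
    le_max_of_le_right (le_max_left _ _)
  have hIoi : |∫ y in Ioi (0 : ℝ), (F y - G y)| ≤ dDist F G :=
    le_max_of_le_right (le_max_right _ _)
  have eIic : ∫ y in Iic (0 : ℝ), (F y - G y) =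
      (∫ y in Iic (0 : ℝ), F y) - ∫ y in Iic (0 : ℝ), G y :=
    integral_sub hIntF hIntG
  have eIoi : ∫ y in Ioi (0 : ℝ), (F y - G y) =
      (∫ y in Ioi (0 : ℝ), (1 - G y)) - ∫ y in Ioi (0 : ℝ), (1 - F y) := by
    rw [← integral_sub hIntG' hIntF']
    congr 1 with y
    ring
  have hd : 0 ≤ dDist F G := (abs_nonneg _).trans hIic
  refine max_le (by linarith [one_le_mTail F]) (max_le ?_ ?_)
  · linarith [integral_Iic_le_mTail F, neg_abs_le (∫ y in Iic (0 : ℝ), (F y - G y))]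
  · linarith [integral_Ioi_le_mTail F, le_abs_self (∫ y in Ioi (0 : ℝ), (F y - G y))]

namespace IsCDF

variable {F : ℝ → ℝ} (hF : IsCDF F) {α : ℝ}
include hF

lemma nonneg (y : ℝ) : 0 ≤ F y := hF.1.le_of_tendsto hF.2.2.1 y

lemma le_one (y : ℝ) : F y ≤ 1 := hF.1.ge_of_tendsto hF.2.2.2 y

lemma neg_div_mTail_le (hIntF : IntegrableOn F (Iic 0)) (hα : 0 < α) {y : ℝ}
    (hy : α ≤ F y) : -(mTail F / α) ≤ y := by
  rcases le_or_gt 0 y with hy0 | hy0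
  · linarith [div_nonneg (mTail_pos F).le hα.le]
  have hMarkov : (0 - y) * α ≤ ∫ x in Iic (0 : ℝ), F x :=
    mul_le_setIntegral_of_le_on_Ioc hy0.le Ioc_subset_Iic_self hIntF
      (Filter.Eventually.of_forall hF.nonneg) fun x hx => hy.trans (hF.1 hx.1.le)
  rw [neg_le, le_div_iff₀ hα]
  linarith [integral_Iic_le_mTail F]

lemma le_apply_mTail_div (hIntF' : IntegrableOn (fun y => 1 - F y) (Ioi 0)) (hα : α < 1) :
    α ≤ F (mTail F / (1 - α)) := by
  set t := mTail F / (1 - α)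
  have hα' : 0 < 1 - α := by linarith
  have ht0 : 0 < t := div_pos (mTail_pos F) hα'
  have ht : t * (1 - α) = mTail F := div_mul_cancel₀ _ hα'.ne'
  have hMarkov : (t - 0) * (1 - F t) ≤ ∫ x in Ioi (0 : ℝ), (1 - F x) :=
    mul_le_setIntegral_of_le_on_Ioc ht0.le Ioc_subset_Ioi_self
      hIntF' (Filter.Eventually.of_forall fun x => sub_nonneg.2 (hF.le_one x))
      fun x hx => sub_le_sub_left (hF.1 hx.2) 1
  have : 1 - F t ≤ 1 - α :=
    le_of_mul_le_mul_left (by linarith [integral_Ioi_le_mTail F]) ht0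
  linarith

lemma abs_VaR_le (hα : α ∈ Ioo 0 1) (hIntF : IntegrableOn F (Iic 0))
    (hIntF' : IntegrableOn (fun y => 1 - F y) (Ioi 0)) :
    |VaR α F| ≤ mTail F / min α (1 - α) := by
  have hmin : 0 < min α (1 - α) := lt_min hα.1 (by linarith [hα.2])
  have hm := (mTail_pos F).le
  have hlow : ∀ y ∈ {y | α ≤ F y}, -(mTail F / α) ≤ y :=
    fun _ hy => hF.neg_div_mTail_le hIntF hα.1 hy
  have hmem := hF.le_apply_mTail_div hIntF' hα.2
  rw [abs_le]
  constructor
  · calc -(mTail F / min α (1 - α)) ≤ -(mTail F / α) := by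
          gcongr; exact min_le_left _ _
      _ ≤ VaR α F := le_csInf ⟨_, hmem⟩ hlow
  · calc VaR α F ≤ mTail F / (1 - α) := csInf_le ⟨_, hlow⟩ hmem
      _ ≤ mTail F / min α (1 - α) := by gcongr; exact min_le_right _ _

end IsCDF

/-- First VaR bound: `|VaR_α(F) − VaR_α(G)| ≤ (2 m(F) + d(F,G)) / min{α, 1−α}`,
and in particular `|VaR_α(G)| ≤ m(G) / min{α, 1−α}`. -/
theorem VaR_first_bound (α : ℝ) (hα : α ∈ Set.Ioo (0 : ℝ) 1)
    (F G : ℝ → ℝ) (hF : IsCDF F) (hG : IsCDF G)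
    (hIntF : IntegrableOn F (Set.Iic (0 : ℝ)))
    (hIntF' : IntegrableOn (fun y => 1 - F y) (Set.Ioi (0 : ℝ)))
    (hIntG : IntegrableOn G (Set.Iic (0 : ℝ)))
    (hIntG' : IntegrableOn (fun y => 1 - G y) (Set.Ioi (0 : ℝ))) :
    |VaR α F - VaR α G| ≤ (2 * mTail F + dDist F G) / min α (1 - α) ∧
      |VaR α G| ≤ mTail G / min α (1 - α) := by
  have hmin : 0 < min α (1 - α) := lt_min hα.1 (by linarith [hα.2])
  have hGv := hG.abs_VaR_le hα hIntG hIntG'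
  refine ⟨?_, hGv⟩
  calc |VaR α F - VaR α G| ≤ |VaR α F| + |VaR α G| := abs_sub _ _
    _ ≤ mTail F / min α (1 - α) + (mTail F + dDist F G) / min α (1 - α) := by
      gcongr
      · exact hF.abs_VaR_le hα hIntF hIntF'
      · exact hGv.trans (by gcongr; exact mTail_le_mTail_add_dDist hIntF hIntF' hIntG hIntG')
    _ = (2 * mTail F + dDist F G) / min α (1 - α) := by ring
end

section
/- Let α ∈ (0,1) and let F be a cumulative distribution function such that the level set { y ∈ ℝ : F(y) = α } contains at most one element. Then the value-at-risk is continuous at F in the supremum norm: for every ε > 0 there exists δ > 0 such that every cumulative distribution function G with sup_y |F(y) − G(y)| ≤ δ satisfies |VaR_α(F) − VaR_α(G)| ≤ ε. -/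
lemma cdf_nonneg {F : ℝ → ℝ} (hF : IsCDF F) (y : ℝ) : 0 ≤ F y :=
  le_of_tendsto hF.2.2.1 (Filter.eventually_atBot.2 ⟨y, fun _ hz => hF.1 hz⟩)

lemma cdf_le_one {F : ℝ → ℝ} (hF : IsCDF F) (y : ℝ) : F y ≤ 1 :=
  ge_of_tendsto hF.2.2.2 (Filter.eventually_atTop.2 ⟨y, fun _ hz => hF.1 hz⟩)

lemma cdf_set_nonempty {α : ℝ} (hα : α < 1) {F : ℝ → ℝ} (hF : IsCDF F) :
    {y : ℝ | α ≤ F y}.Nonempty :=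
  (hF.2.2.2.eventually (eventually_ge_nhds hα)).exists

lemma cdf_set_bddBelow {α : ℝ} (hα : 0 < α) {F : ℝ → ℝ} (hF : IsCDF F) :
    BddBelow {y : ℝ | α ≤ F y} := by
  obtain ⟨z, hz⟩ := (hF.2.2.1.eventually (eventually_lt_nhds hα)).exists
  exact ⟨z, fun y hy => le_of_not_gt fun h => (le_trans hy (hF.1 h.le)).not_gt hz⟩

lemma cdf_VaR_ge {α : ℝ} (hα : α ∈ Set.Ioo (0 : ℝ) 1) {F : ℝ → ℝ} (hF : IsCDF F) :
    α ≤ F (VaR α F) := by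
  have hne := cdf_set_nonempty hα.2 hF
  have ht : Filter.Tendsto F (nhdsWithin (VaR α F) (Set.Ioi (VaR α F))) (nhds (F (VaR α F))) :=
    (hF.2.1 _).mono_left (nhdsWithin_mono _ Set.Ioi_subset_Ici_self)
  refine ge_of_tendsto ht (eventually_nhdsWithin_of_forall fun y hy => ?_)
  obtain ⟨s, hs, hsy⟩ := exists_lt_of_csInf_lt hne hy
  exact hs.trans (hF.1 hsy.le)

lemma cdf_lt_of_lt_VaR {α : ℝ} (hα : α ∈ Set.Ioo (0 : ℝ) 1) {F : ℝ → ℝ} (hF : IsCDF F)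
    {y : ℝ} (hy : y < VaR α F) : F y < α := by
  by_contra h
  exact absurd (csInf_le (cdf_set_bddBelow hα.1 hF) (not_lt.1 h)) (not_le.2 hy)

lemma cdf_gt_of_VaR_lt {α : ℝ} (hα : α ∈ Set.Ioo (0 : ℝ) 1) {F : ℝ → ℝ} (hF : IsCDF F)
    (hlevel : Set.Subsingleton {y : ℝ | F y = α})
    {y : ℝ} (hy : VaR α F < y) : α < F y := by
  have h1 := cdf_VaR_ge hα hF
  have h2 : α ≤ F y := h1.trans (hF.1 hy.le)
  rcases h2.lt_or_eq with h | h
  · exact h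
  · exfalso
    have hv : F (VaR α F) = α := le_antisymm ((hF.1 hy.le).trans h.symm.le) h1
    exact hy.ne (hlevel hv h.symm)

/-- If the level set `{ y : F y = α }` has at most one element, then the
value-at-risk is continuous at `F` in the supremum norm over CDFs. -/
theorem VaR_continuous_at (α : ℝ) (hα : α ∈ Set.Ioo (0 : ℝ) 1)
    (F : ℝ → ℝ) (hF : IsCDF F)
    (hlevel : Set.Subsingleton {y : ℝ | F y = α}) :
    ∀ ε > 0, ∃ δ > 0, ∀ G : ℝ → ℝ, IsCDF G →
      (⨆ y : ℝ, |F y - G y|) ≤ δ → |VaR α F - VaR α G| ≤ ε := by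
  intro ε hε
  set v := VaR α F with hv
  have hδ₁ : 0 < α - F (v - ε) := sub_pos.2 (cdf_lt_of_lt_VaR hα hF (by linarith))
  have hδ₂ : 0 < F (v + ε) - α := sub_pos.2 (cdf_gt_of_VaR_lt hα hF hlevel (by linarith))
  refine ⟨min (α - F (v - ε)) (F (v + ε) - α) / 2, by positivity, fun G hG hsup => ?_⟩
  set δ := min (α - F (v - ε)) (F (v + ε) - α) / 2 with hδdef
  have hpt : ∀ y, |F y - G y| ≤ δ := by
    intro y
    refine le_trans (le_ciSup (f := fun z => |F z - G z|) ?_ y) hsup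
    refine ⟨2, ?_⟩
    rintro _ ⟨z, rfl⟩
    have h1 := cdf_nonneg hF z
    have h2 := cdf_le_one hF z
    have h3 := cdf_nonneg hG z
    have h4 := cdf_le_one hG z
    exact abs_le.2 ⟨by linarith, by linarith⟩
  have hGne : {y : ℝ | α ≤ G y}.Nonempty := cdf_set_nonempty hα.2 hG
  have hGbdd := cdf_set_bddBelow hα.1 hG
  have hmin₁ := min_le_left (α - F (v - ε)) (F (v + ε) - α)
  have hmin₂ := min_le_right (α - F (v - ε)) (F (v + ε) - α)
  have hub : VaR α G ≤ v + ε := by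
    refine csInf_le hGbdd ?_
    have h := abs_le.1 (hpt (v + ε))
    show α ≤ G (v + ε)
    linarith [h.2]
  have hlb : v - ε ≤ VaR α G := by
    refine le_csInf hGne fun y hy => ?_
    by_contra hlt
    push_neg at hlt
    have h1 : F y ≤ F (v - ε) := hF.1 hlt.le
    have h2 := abs_le.1 (hpt y)
    have hy' : α ≤ G y := hy
    linarith [h2.1]
  rw [abs_le]
  constructor <;> linarith
end
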